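/- arXiv:1801.02782 — 4 statements merged into one kernel-verified Lean document; each statement's English description precedes it below -/
import Mathlib

section
/- For all real numbers φ and φ_l, cos φ ≥ -((φ - φ_l + sin φ_l)²)/2 + cos φ_l + (sin² φ_l)/2. -/
/-!
The function `x ↦ x ^ 2 / 2 + cos x` is convex, its second derivative being `1 - cos x ≥ 0`.
The surrogate is its tangent-line inequality at `φl`, rearranged.
-/

open Real Set

theorem ConvexOn.add_mul_sub_le_of_hasDerivAt {S : Set ℝ} {f : ℝ → ℝ} {f' x y : ℝ}
    (hfc : ConvexOn ℝ S f) (hx : x ∈ S) (hy : y ∈ S) (hf' : HasDerivAt f f' x) :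
    f x + f' * (y - x) ≤ f y := by
  rcases lt_trichotomy x y with hxy | rfl | hyx
  · have h := hfc.le_slope_of_hasDerivAt hx hy hxy hf'
    rw [slope_def_field, le_div_iff₀ (sub_pos.2 hxy)] at h
    linarith
  · simp
  · have h := hfc.slope_le_of_hasDerivAt hy hx hyx hf'
    rw [slope_def_field, div_le_iff₀ (sub_pos.2 hyx)] at h
    linarith

namespace Real

theorem hasDerivAt_sq_div_two_add_cos (x : ℝ) :
    HasDerivAt (fun x => x ^ 2 / 2 + cos x) (x - sin x) x := by
  simpa [sub_eq_add_neg] using ((hasDerivAt_pow 2 x).div_const 2).fun_add (hasDerivAt_cos x)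

theorem convexOn_sq_div_two_add_cos : ConvexOn ℝ univ (fun x => x ^ 2 / 2 + cos x) := by
  refine convexOn_of_hasDerivWithinAt2_nonneg convex_univ (by fun_prop)
    (fun x _ => (hasDerivAt_sq_div_two_add_cos x).hasDerivWithinAt)
    (fun x _ => ((hasDerivAt_id x).sub (hasDerivAt_sin x)).hasDerivWithinAt) fun x _ => ?_
  simpa using cos_le_one x

theorem cos_sub_mul_sin_sub_sq_div_two_le_cos (x y : ℝ) :
    cos y - (x - y) * sin y - (x - y) ^ 2 / 2 ≤ cos x := by
  have h := convexOn_sq_div_two_add_cos.add_mul_sub_le_of_hasDerivAt (mem_univ y) (mem_univ x)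
    (hasDerivAt_sq_div_two_add_cos y)
  linarith

end Real

theorem cos_quadratic_surrogate (φ φl : ℝ) :
    Real.cos φ ≥ -((φ - φl + Real.sin φl) ^ 2) / 2 + Real.cos φl + (Real.sin φl) ^ 2 / 2 := by
  calc -((φ - φl + Real.sin φl) ^ 2) / 2 + Real.cos φl + (Real.sin φl) ^ 2 / 2
      = Real.cos φl - (φ - φl) * Real.sin φl - (φ - φl) ^ 2 / 2 := by ring
    _ ≤ Real.cos φ := Real.cos_sub_mul_sin_sub_sq_div_two_le_cos φ φl
end

section
/- Let ρ > 0 and z > 0 be real constants and let u_l ∈ ℝ². Define B̄ = 2ρ(1/z² - 1/(ρ‖u_l‖² + z)²) and C̄ = 1/(ρ‖u_l‖² + z) + 2ρ‖u_l‖²/(ρ‖u_l‖² + z)² - ρ‖u_l‖²/z². Then for every u ∈ ℝ², 1/(ρ‖u‖² + z) ≥ -ρ‖u‖²/z² + B̄⟨u, u_l⟩ + C̄. -/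
/-!
In the variable `s = ‖u‖²` the function `1 / (ρ s + z)` is convex, so it lies above its tangent
at `s = ‖u_l‖²`. The surrogate is that tangent minus `ρ (1/z² - 1/(ρ‖u_l‖² + z)²) ‖u - u_l‖²`,
a nonnegative multiple of a square, since `ρ‖u_l‖² + z ≥ z`.
-/

theorem one_div_sub_div_sq_le_one_div {a b : ℝ} (ha : 0 < a) (hb : 0 < b) :
    1 / b - (a - b) / b ^ 2 ≤ 1 / a := by
  have hgap : 1 / a - (1 / b - (a - b) / b ^ 2) = (a - b) ^ 2 / (a * b ^ 2) := by
    field_simp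
    ring
  have : 0 ≤ (a - b) ^ 2 / (a * b ^ 2) := by positivity
  linarith

theorem one_div_sq_le_one_div_sq_of_le {a b : ℝ} (ha : 0 < a) (hab : a ≤ b) :
    1 / b ^ 2 ≤ 1 / a ^ 2 :=
  one_div_le_one_div_of_le (by positivity) (pow_le_pow_left₀ ha.le hab 2)

theorem surrogate_g1_global_lower_bound (ρ z : ℝ) (hρ : 0 < ρ) (hz : 0 < z)
    (ul : EuclideanSpace ℝ (Fin 2)) (u : EuclideanSpace ℝ (Fin 2)) :
    1 / (ρ * ‖u‖ ^ 2 + z) ≥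
      -ρ * ‖u‖ ^ 2 / z ^ 2
        + (2 * ρ * (1 / z ^ 2 - 1 / (ρ * ‖ul‖ ^ 2 + z) ^ 2)) * (inner ℝ u ul : ℝ)
        + (1 / (ρ * ‖ul‖ ^ 2 + z) + 2 * ρ * ‖ul‖ ^ 2 / (ρ * ‖ul‖ ^ 2 + z) ^ 2
            - ρ * ‖ul‖ ^ 2 / z ^ 2) := by
  have hz_le : z ≤ ρ * ‖ul‖ ^ 2 + z := le_add_of_nonneg_left (by positivity)
  have htangent := one_div_sub_div_sq_le_one_div
    (show 0 < ρ * ‖u‖ ^ 2 + z by positivity) (hz.trans_le hz_le)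
  have hcoef : 0 ≤ 1 / z ^ 2 - 1 / (ρ * ‖ul‖ ^ 2 + z) ^ 2 :=
    sub_nonneg.2 (one_div_sq_le_one_div_sq_of_le hz hz_le)
  have hdist : 0 ≤ ρ * (1 / z ^ 2 - 1 / (ρ * ‖ul‖ ^ 2 + z) ^ 2) * ‖u - ul‖ ^ 2 := by
    positivity
  rw [norm_sub_sq_real] at hdist
  linear_combination htangent + hdist
end

section
/- For positive real constants ρ and z, the function h : ℝ² → ℝ given by h(u) = 1/(ρ‖u‖² + z) + ρ‖u‖²/z² is convex on ℝ². -/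
open Set

lemma g_convex (ρ z : ℝ) (hρ : 0 < ρ) (hz : 0 < z) :
    ConvexOn ℝ (Ici 0) (fun t : ℝ => 1 / (ρ * t + z) + ρ * t / z ^ 2) := by
  have hA : ConvexOn ℝ (Ici 0) (fun t : ℝ => 1 / (ρ * t + z)) := by
    have hinv : ConvexOn ℝ (Ioi (0:ℝ)) (fun x : ℝ => x ^ (-1 : ℤ)) :=
      (strictConvexOn_zpow (by norm_num) (by norm_num)).convexOn
    have haff : ConvexOn ℝ ((fun t : ℝ => ρ * t + z) ⁻¹' (Ioi 0))
        ((fun x : ℝ => x ^ (-1 : ℤ)) ∘ (fun t : ℝ => ρ * t + z)) := by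
      have := hinv.comp_affineMap
        (AffineMap.mk (fun t : ℝ => ρ * t + z)
          { toFun := fun t : ℝ => ρ * t
            map_add' := by intro a b; ring
            map_smul' := by intro c a; simp; ring }
          (by intro p v; simp; ring))
      simpa using this
    have hsub : Ici (0:ℝ) ⊆ (fun t : ℝ => ρ * t + z) ⁻¹' (Ioi 0) := by
      intro t ht
      simp only [mem_preimage, mem_Ioi]
      have : 0 ≤ ρ * t := mul_nonneg hρ.le ht
      linarith
    have := haff.subset hsub (convex_Ici 0)
    refine this.congr ?_
    intro t _
    simp [Function.comp, zpow_neg, one_div]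
  have hB : ConvexOn ℝ (Ici 0) (fun t : ℝ => ρ * t / z ^ 2) := by
    have : ConvexOn ℝ (Ici (0:ℝ)) (fun t : ℝ => (ρ / z ^ 2) * t) :=
      ConvexOn.smul (c := ρ / z ^ 2) (by positivity) (convexOn_id (convex_Ici 0))
    refine this.congr ?_
    intro t _; simp [smul_eq_mul]; ring
  exact hA.add hB

lemma g_mono (ρ z : ℝ) (hρ : 0 < ρ) (hz : 0 < z) :
    MonotoneOn (fun t : ℝ => 1 / (ρ * t + z) + ρ * t / z ^ 2) (Ici 0) := by
  intro a ha b hb hab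
  have h1 : 0 < ρ * a + z := by have : 0 ≤ ρ * a := mul_nonneg hρ.le ha; linarith
  have h2 : 0 < ρ * b + z := by have : 0 ≤ ρ * b := mul_nonneg hρ.le hb; linarith
  have hz2 : (0:ℝ) < z ^ 2 := by positivity
  simp only []
  rw [div_add_div _ _ h1.ne' hz2.ne', div_add_div _ _ h2.ne' hz2.ne',
    div_le_div_iff₀ (by positivity) (by positivity)]
  nlinarith [mul_nonneg (mul_nonneg hρ.le (sub_nonneg.2 hab)) (mul_nonneg (mul_nonneg hρ.le ha) (mul_nonneg hρ.le hb)),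
    mul_nonneg (mul_nonneg hρ.le (sub_nonneg.2 hab)) (mul_nonneg hz.le (mul_nonneg hρ.le ha)),
    mul_nonneg (mul_nonneg hρ.le (sub_nonneg.2 hab)) (mul_nonneg hz.le (mul_nonneg hρ.le hb))]

theorem h1_convex (ρ z : ℝ) (hρ : 0 < ρ) (hz : 0 < z) :
    ConvexOn ℝ Set.univ
      (fun u : EuclideanSpace ℝ (Fin 2) => 1 / (ρ * ‖u‖ ^ 2 + z) + ρ * ‖u‖ ^ 2 / z ^ 2) := by
  set f : EuclideanSpace ℝ (Fin 2) → ℝ := fun u => ‖u‖ ^ 2 with hf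
  have hfc : ConvexOn ℝ univ f := by
    have hnorm : ConvexOn ℝ univ (fun u : EuclideanSpace ℝ (Fin 2) => ‖u‖) :=
      convexOn_univ_norm
    have himgn : (fun u : EuclideanSpace ℝ (Fin 2) => ‖u‖) '' univ = Ici 0 := by
      ext t
      constructor
      · rintro ⟨u, -, rfl⟩; exact norm_nonneg u
      · intro ht
        exact ⟨EuclideanSpace.single 0 t, mem_univ _, by
          simp [EuclideanSpace.norm_single, abs_of_nonneg (mem_Ici.1 ht)]⟩
    have hsq : ConvexOn ℝ ((fun u : EuclideanSpace ℝ (Fin 2) => ‖u‖) '' univ)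
        (fun x : ℝ => x ^ 2) := by rw [himgn]; exact convexOn_pow 2
    have hmsq : MonotoneOn (fun x : ℝ => x ^ 2)
        ((fun u : EuclideanSpace ℝ (Fin 2) => ‖u‖) '' univ) := by
      rw [himgn]; intro a ha b _ hab; exact pow_le_pow_left₀ (mem_Ici.1 ha) hab 2
    exact hsq.comp hnorm hmsq
  have himg : f '' univ = Ici 0 := by
    ext t
    constructor
    · rintro ⟨u, -, rfl⟩; exact mem_Ici.2 (by positivity)
    · intro ht
      refine ⟨EuclideanSpace.single 0 (Real.sqrt t), mem_univ _, ?_⟩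
      simp [hf, EuclideanSpace.norm_single, Real.sq_sqrt ht]
  have hg : ConvexOn ℝ (f '' univ) (fun t : ℝ => 1 / (ρ * t + z) + ρ * t / z ^ 2) := by
    rw [himg]; exact g_convex ρ z hρ hz
  have hm : MonotoneOn (fun t : ℝ => 1 / (ρ * t + z) + ρ * t / z ^ 2) (f '' univ) := by
    rw [himg]; exact g_mono ρ z hρ hz
  exact hg.comp hfc hm
end

section
/- Let ρ > 0, z > 0, and u_l ∈ ℝ². Define h(u) = 1/(ρ‖u‖² + z) + ρ‖u‖²/z² - B̄⟨u, u_l⟩ - C̄ with B̄ = 2ρ(1/z² - 1/(ρ‖u_l‖² + z)²) and C̄ = 1/(ρ‖u_l‖² + z) + 2ρ‖u_l‖²/(ρ‖u_l‖² + z)² - ρ‖u_l‖²/z². Then h attains its global minimum value 0 at u = u_l. -/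
/-!
With `P = ρ‖u‖² + z` and `Q = ρ‖u_l‖² + z`, the function `h` splits exactly as
`h(u) = (1/P - (1/Q - (P - Q)/Q²)) + ρ (1/z² - 1/Q²) ‖u - u_l‖²`.
The first term is the gap between `1/x` and its tangent line at `Q`, nonnegative by convexity,
and the second is nonnegative because `Q ≥ z`. Both vanish at `u = u_l`.
-/

lemma one_div_eq_tangent_add_sq_div {p q : ℝ} (hp : p ≠ 0) (hq : q ≠ 0) :
    1 / p = 1 / q - (p - q) / q ^ 2 + (p - q) ^ 2 / (p * q ^ 2) := by
  field_simp
  ring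

section SurrogateGap

variable {E : Type*} [NormedAddCommGroup E] [InnerProductSpace ℝ E]

noncomputable def surrogateGap (ρ z : ℝ) (ul u : E) : ℝ :=
  1 / (ρ * ‖u‖ ^ 2 + z) + ρ * ‖u‖ ^ 2 / z ^ 2
    - (2 * ρ * (1 / z ^ 2 - 1 / (ρ * ‖ul‖ ^ 2 + z) ^ 2)) * (inner ℝ u ul : ℝ)
    - (1 / (ρ * ‖ul‖ ^ 2 + z) + 2 * ρ * ‖ul‖ ^ 2 / (ρ * ‖ul‖ ^ 2 + z) ^ 2
        - ρ * ‖ul‖ ^ 2 / z ^ 2)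

lemma surrogateGap_self (ρ z : ℝ) (ul : E) : surrogateGap ρ z ul ul = 0 := by
  simp only [surrogateGap, real_inner_self_eq_norm_sq]
  ring

variable {ρ z : ℝ}

lemma surrogateGap_eq (hρ : 0 ≤ ρ) (hz : 0 < z) (ul u : E) :
    surrogateGap ρ z ul u =
      (ρ * ‖u‖ ^ 2 - ρ * ‖ul‖ ^ 2) ^ 2 / ((ρ * ‖u‖ ^ 2 + z) * (ρ * ‖ul‖ ^ 2 + z) ^ 2)
        + ρ * (1 / z ^ 2 - 1 / (ρ * ‖ul‖ ^ 2 + z) ^ 2) * ‖u - ul‖ ^ 2 := by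
  have hP : ρ * ‖u‖ ^ 2 + z ≠ 0 := by positivity
  have hQ : ρ * ‖ul‖ ^ 2 + z ≠ 0 := by positivity
  rw [surrogateGap, one_div_eq_tangent_add_sq_div hP hQ, norm_sub_sq_real]
  ring

lemma surrogateGap_nonneg (hρ : 0 ≤ ρ) (hz : 0 < z) (ul u : E) : 0 ≤ surrogateGap ρ z ul u := by
  have hzQ : z ≤ ρ * ‖ul‖ ^ 2 + z := le_add_of_nonneg_left (by positivity)
  have hcoeff : 0 ≤ 1 / z ^ 2 - 1 / (ρ * ‖ul‖ ^ 2 + z) ^ 2 :=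
    sub_nonneg.mpr (one_div_le_one_div_of_le (by positivity) (by gcongr))
  rw [surrogateGap_eq hρ hz]
  positivity

end SurrogateGap

theorem h1_global_min_at_ul (ρ z : ℝ) (hρ : 0 < ρ) (hz : 0 < z)
    (ul : EuclideanSpace ℝ (Fin 2)) :
    (fun u : EuclideanSpace ℝ (Fin 2) =>
        1 / (ρ * ‖u‖ ^ 2 + z) + ρ * ‖u‖ ^ 2 / z ^ 2
          - (2 * ρ * (1 / z ^ 2 - 1 / (ρ * ‖ul‖ ^ 2 + z) ^ 2)) * (inner ℝ u ul : ℝ)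
          - (1 / (ρ * ‖ul‖ ^ 2 + z) + 2 * ρ * ‖ul‖ ^ 2 / (ρ * ‖ul‖ ^ 2 + z) ^ 2
              - ρ * ‖ul‖ ^ 2 / z ^ 2)) ul = 0 ∧
    ∀ u : EuclideanSpace ℝ (Fin 2),
      0 ≤ 1 / (ρ * ‖u‖ ^ 2 + z) + ρ * ‖u‖ ^ 2 / z ^ 2
          - (2 * ρ * (1 / z ^ 2 - 1 / (ρ * ‖ul‖ ^ 2 + z) ^ 2)) * (inner ℝ u ul : ℝ)
          - (1 / (ρ * ‖ul‖ ^ 2 + z) + 2 * ρ * ‖ul‖ ^ 2 / (ρ * ‖ul‖ ^ 2 + z) ^ 2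
              - ρ * ‖ul‖ ^ 2 / z ^ 2) :=
  ⟨surrogateGap_self ρ z ul, surrogateGap_nonneg hρ.le hz ul⟩
end
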